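/- Let x' = 1^k · x · 0^k where x has length n. If x' contains a substring of balance k+1 ending at position j ≥ k+n (0-indexed, i.e., ending within the trailing 0^k block), then either some prefix of x has negative balance or the total balance of x is nonzero. -/

import Mathlib

/-- Balance of a binary word: number of 0s (false) minus number of 1s (true). -/
def bal (s : List Bool) : ℤ := (s.count false : ℤ) - (s.count true : ℤ)

/-- The substring x[i..j] (inclusive, 0-indexed). -/
def sub (x : List Bool) (i j : ℕ) : List Bool := (x.drop i).take (j + 1 - i)

/-- x is a Dyck word of depth at most k: every prefix has balance in [0,k] and total balance 0. -/
def DyckBounded (x : List Bool) (k : ℕ) : Prop :=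
  (∀ p, p <+: x → 0 ≤ bal p ∧ bal p ≤ (k : ℤ)) ∧ bal x = 0

/-!
The balance of `x'[i..j]` is the difference of the prefix balances of `x'` at `j + 1` and `i`.
If every prefix of `x` is nonnegative, every prefix of `x' = 1^k x 0^k` has balance at least `-k`,
while a prefix ending in the trailing block has balance at most `-k + bal x + k = bal x`. With
`bal x = 0` this bounds the balance of the substring by `k`.
-/

open List

lemma bal_append (a b : List Bool) : bal (a ++ b) = bal a + bal b := by
  simp only [bal, count_append]
  push_cast
  ring

lemma bal_replicate_true (m : ℕ) : bal (replicate m true) = -(m : ℤ) := by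
  simp [bal, count_replicate]

lemma bal_take_replicate_true (k m : ℕ) :
    bal ((replicate k true).take m) = -(min m k : ℕ) := by
  rw [take_replicate, bal_replicate_true]

lemma bal_take_replicate_false (k m : ℕ) :
    bal ((replicate k false).take m) = (min m k : ℕ) := by
  simp [bal, take_replicate, count_replicate]

lemma bal_take_add_bal_sub (l : List Bool) {i j : ℕ} (hij : i ≤ j + 1) :
    bal (l.take i) + bal (sub l i j) = bal (l.take (j + 1)) := by
  rw [← bal_append, sub, ← take_add, Nat.add_sub_cancel' hij]

lemma neg_le_bal_take_pad {x : List Bool} (hx : ∀ p, p <+: x → 0 ≤ bal p) (k m : ℕ) :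
    -(k : ℤ) ≤ bal ((replicate k true ++ x ++ replicate k false).take m) := by
  simp only [take_append, length_replicate, bal_append, bal_take_replicate_true,
    bal_take_replicate_false]
  have := hx _ (take_prefix (m - k) x)
  omega

lemma bal_take_pad_le {x : List Bool} {k m : ℕ} (hm : k + x.length ≤ m) :
    bal ((replicate k true ++ x ++ replicate k false).take m) ≤ bal x := by
  rw [take_append, take_of_length_le (by simpa using hm), bal_append, bal_append,
    bal_replicate_true, bal_take_replicate_false]
  omega

theorem plus_substring_in_tail_general (x : List Bool) (n k : ℕ) (hn : x.length = n)
    (i j : ℕ) (hij : i ≤ j) (hjk : k + n ≤ j)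
    (hbal : bal (sub (List.replicate k true ++ x ++ List.replicate k false) i j)
      = (k : ℤ) + 1) :
    (∃ p, p <+: x ∧ bal p < 0) ∨ bal x ≠ 0 := by
  by_contra! h
  obtain ⟨hprefix, hx⟩ := h
  have hsplit := bal_take_add_bal_sub (replicate k true ++ x ++ replicate k false)
    (Nat.le_succ_of_le hij)
  have hlow := neg_le_bal_take_pad hprefix k i
  have hhigh := bal_take_pad_le (x := x) (k := k) (m := j + 1) (by omega)
  omega

/-- If x' = 1^k x 0^k has a substring of balance k+1 ending at position j ≥ k+n, then some
prefix of x has negative balance or the total balance of x is nonzero. -/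
theorem plus_substring_in_tail (x : List Bool) (n k : ℕ) (hn : x.length = n)
    (i j : ℕ) (hij : i ≤ j) (hj : j < n + 2 * k) (hjk : k + n ≤ j)
    (hbal : bal (sub (List.replicate k true ++ x ++ List.replicate k false) i j)
      = (k : ℤ) + 1) :
    (∃ p, p <+: x ∧ bal p < 0) ∨ bal x ≠ 0 :=
  plus_substring_in_tail_general x n k hn i j hij hjk hbal
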